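/- Let G be a 2-regular loopless multigraph on n vertices all of whose cycles have even length (n even, n ≥ 4). Then there exist at least (n−2)!/2 Hamiltonian cycles C on the vertex set of G such that the 4-regular multigraph G ∪ C admits a Hamiltonian decomposition, i.e., G ∪ C = C₁ ∪ C₂ with C₁, C₂ Hamiltonian cycles. -/

import Mathlib

abbrev Edges (n : ℕ) : Type := Multiset (Sym2 (Fin n))

/-- Degree of a vertex in a loopless multigraph given by an edge multiset. -/
def edeg {n : ℕ} (E : Edges n) (v : Fin n) : ℕ :=
  Multiset.card (E.filter (fun e => v ∈ e))

/-- The multigraph has no loops. -/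
def Loopless {n : ℕ} (E : Edges n) : Prop := ∀ e ∈ E, ¬ e.IsDiag

/-- A perfect matching: a loopless 1-regular multigraph on all vertices. -/
def IsPM {n : ℕ} (E : Edges n) : Prop :=
  Loopless E ∧ ∀ v, edeg E v = 1

/-- Adjacency in the multigraph. -/
def EAdj {n : ℕ} (E : Edges n) (u v : Fin n) : Prop :=
  u ≠ v ∧ s(u, v) ∈ E

/-- A Hamiltonian cycle: a connected, loopless, 2-regular multigraph on all vertices. -/
def IsHam {n : ℕ} (E : Edges n) : Prop :=
  Loopless E ∧ (∀ v, edeg E v = 2) ∧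
    ∀ u v : Fin n, Relation.ReflTransGen (EAdj E) u v

/-- A 2-regular loopless multigraph (a disjoint union of cycles). -/
def TwoRegular {n : ℕ} (E : Edges n) : Prop :=
  Loopless E ∧ ∀ v, edeg E v = 2

/-- Every connected component (cycle) has an even number of vertices,
i.e. all cycles have even length. -/
def EvenCycles {n : ℕ} (E : Edges n) : Prop :=
  ∀ v : Fin n, Even (Set.ncard {u | Relation.ReflTransGen (EAdj E) v u})

/-- `C` is a compatible cycle for `G`: a Hamiltonian cycle such that the edge-disjoint
union `G ∪ C` decomposes into two edge-disjoint Hamiltonian cycles. -/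
def Compatible {n : ℕ} (G C : Edges n) : Prop :=
  IsHam C ∧ ∃ C₁ C₂ : Edges n, IsHam C₁ ∧ IsHam C₂ ∧ G + C = C₁ + C₂

/-!
Since its cycles are even, `G` splits into perfect matchings `M₁ + M₂`. If perfect matchings
`N₁, N₂` make `M₁ + N₁`, `N₁ + N₂` and `M₂ + N₂` Hamiltonian, then `C = N₁ + N₂` is compatible,
as `G + C = (M₁ + N₁) + (M₂ + N₂)`, and `C` determines `{N₁, N₂}` because a Hamiltonian cycle on
at least three vertices splits into two perfect matchings in only one way.

The pairs are counted greedily. Given `c` perfect matchings on `k` vertices, match a fixed vertex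
`a` to any `w` other than `a` and its `c` partners, shortcut each matching's path through `a` and
`w`, and recurse on `k - 2` vertices; a Hamiltonian completion there becomes one on all `k`
vertices by re-inserting the path. This gives `(n - 2)!!` choices of `N₁` (`c = 1`) and then
`(n - 3)!!` of `N₂` (`c = 2`), so `(n - 2)!` pairs and at least `(n - 2)! / 2` cycles.
-/

section Basic

variable {n : ℕ}

abbrev Reach (E : Edges n) (u v : Fin n) : Prop := Relation.ReflTransGen (EAdj E) u v

def IsPMOn (S : Finset (Fin n)) (E : Edges n) : Prop :=
  Loopless E ∧ (∀ v ∈ S, edeg E v = 1) ∧ ∀ v ∉ S, edeg E v = 0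

def IsHamOn (S : Finset (Fin n)) (E : Edges n) : Prop :=
  Loopless E ∧ (∀ v ∈ S, edeg E v = 2) ∧ (∀ v ∉ S, edeg E v = 0) ∧
    ∀ u ∈ S, ∀ v ∈ S, Reach E u v

lemma isPMOn_univ_iff {E : Edges n} : IsPMOn Finset.univ E ↔ IsPM E := by
  simp [IsPMOn, IsPM]

lemma isHamOn_univ_iff {E : Edges n} : IsHamOn Finset.univ E ↔ IsHam E := by
  simp [IsHamOn, IsHam]

@[simp] lemma edeg_zero (v : Fin n) : edeg 0 v = 0 := rfl

lemma edeg_add (E F : Edges n) (v : Fin n) : edeg (E + F) v = edeg E v + edeg F v := by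
  simp [edeg, Multiset.filter_add]

lemma edeg_cons (e : Sym2 (Fin n)) (E : Edges n) (v : Fin n) :
    edeg (e ::ₘ E) v = (if v ∈ e then 1 else 0) + edeg E v := by
  by_cases h : v ∈ e <;> simp [edeg, h, add_comm]

lemma edeg_singleton (e : Sym2 (Fin n)) (v : Fin n) :
    edeg {e} v = if v ∈ e then 1 else 0 := by
  simp [← Multiset.cons_zero, edeg_cons]

lemma edeg_eq_add_edeg_erase {E : Edges n} {e : Sym2 (Fin n)} (he : e ∈ E) (v : Fin n) :
    edeg E v = (if v ∈ e then 1 else 0) + edeg (E.erase e) v := by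
  conv_lhs => rw [← Multiset.cons_erase he]
  exact edeg_cons _ _ _

lemma edeg_erase_of_notMem {G : Edges n} {a b v : Fin n} (hab : s(a, b) ∈ G) (hva : v ≠ a)
    (hvb : v ≠ b) : edeg (G.erase s(a, b)) v = edeg G v := by
  rw [edeg_eq_add_edeg_erase hab v, if_neg (by simp [Sym2.mem_iff, hva, hvb]), zero_add]

lemma edeg_ne_zero_of_mem {E : Edges n} {e : Sym2 (Fin n)} {v : Fin n}
    (he : e ∈ E) (hv : v ∈ e) : edeg E v ≠ 0 := by
  simpa [edeg, Multiset.filter_eq_nil] using ⟨e, he, hv⟩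

lemma edeg_mono {E F : Edges n} (h : E ≤ F) (v : Fin n) : edeg E v ≤ edeg F v :=
  Multiset.card_le_card (Multiset.filter_le_filter _ h)

lemma Loopless.mono {E F : Edges n} (hF : Loopless F) (h : E ≤ F) : Loopless E :=
  fun e he => hF e (Multiset.mem_of_le h he)

lemma Loopless.ne {E : Edges n} (hE : Loopless E) {u v : Fin n} (h : s(u, v) ∈ E) : u ≠ v :=
  fun huv => hE _ h (Sym2.mk_isDiag_iff.2 huv)

lemma EAdj.symm {E : Edges n} {u v : Fin n} (h : EAdj E u v) : EAdj E v u :=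
  ⟨h.1.symm, Sym2.eq_swap ▸ h.2⟩

lemma Reach.symm {E : Edges n} {u v : Fin n} (h : Reach E u v) : Reach E v u := by
  induction h with
  | refl => exact .refl
  | tail _ hadj ih => exact .head hadj.symm ih

lemma Reach.mono {E F : Edges n} (h : E ≤ F) {u v : Fin n} (hr : Reach E u v) :
    Reach F u v :=
  Relation.ReflTransGen.mono (fun _ _ huv => ⟨huv.1, Multiset.mem_of_le h huv.2⟩) _ _ hr

lemma sum_edeg {E : Edges n} (hE : Loopless E) :
    ∑ v, edeg E v = 2 * Multiset.card E := by
  induction E using Multiset.induction with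
  | empty => simp
  | cons e E ih =>
    induction e with
    | h a b =>
      have hab : a ≠ b := hE.ne (Multiset.mem_cons_self _ _)
      have hsum : ∑ v : Fin n, (if v ∈ s(a, b) then 1 else 0) = 2 := by
        simp [Sym2.mem_iff, Finset.filter_or, Finset.filter_eq', hab]
      simp only [edeg_cons, Finset.sum_add_distrib, hsum,
        ih (hE.mono (Multiset.le_cons_self _ _)), Multiset.card_cons]
      ring

lemma finite_setOf_card_le (k : ℕ) : {N : Edges n | Multiset.card N ≤ k}.Finite := by
  refine (Multiset.powerset (k • Finset.univ.val)).toFinset.finite_toSet.subset fun N hN => ?_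
  rw [Finset.mem_coe, Multiset.mem_toFinset, Multiset.mem_powerset, Multiset.le_iff_count]
  intro e
  simpa [Multiset.count_nsmul] using (Multiset.count_le_card e N).trans hN

end Basic

section Fibers

open Classical in
lemma ncard_inter_preimage_singleton_eq {α β : Type*} {s : Set α} (hs : s.Finite) (f : α → β)
    (b : β) : (s ∩ f ⁻¹' {b}).ncard = (hs.toFinset.filter (f · = b)).card := by
  rw [← Set.ncard_coe_finset]
  congr 1
  ext a
  simp

lemma mul_le_ncard_of_le_ncard_fiber {α β : Type*} {s : Set α} (hs : s.Finite) (f : α → β)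
    (t : Finset β) {k : ℕ} (hk : ∀ b ∈ t, k ≤ (s ∩ f ⁻¹' {b}).ncard) :
    t.card * k ≤ s.ncard := by
  classical
  calc t.card * k = ∑ _b ∈ t, k := by rw [Finset.sum_const, smul_eq_mul]
    _ ≤ ∑ b ∈ t, (hs.toFinset.filter (f · = b)).card := Finset.sum_le_sum fun b hb => by
        rw [← ncard_inter_preimage_singleton_eq hs]; exact hk b hb
    _ = (hs.toFinset.filter (f · ∈ t)).card := Finset.sum_card_fiberwise_eq_card_filter _ _ _
    _ ≤ hs.toFinset.card := Finset.card_filter_le _ _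
    _ = s.ncard := (Set.ncard_eq_toFinset_card s hs).symm

lemma ncard_le_mul_ncard_of_ncard_fiber_le {α β : Type*} {s : Set α} {t : Set β}
    (hs : s.Finite) (ht : t.Finite) {f : α → β} (hf : Set.MapsTo f s t) {k : ℕ}
    (hk : ∀ b ∈ t, (s ∩ f ⁻¹' {b}).ncard ≤ k) : s.ncard ≤ k * t.ncard := by
  classical
  rw [Set.ncard_eq_toFinset_card s hs, Set.ncard_eq_toFinset_card t ht]
  exact Finset.card_le_mul_card_image_of_maps_to (by simpa using fun a ha => hf ha) k fun b hb => by
    rw [← ncard_inter_preimage_singleton_eq hs]; exact hk b (by simpa using hb)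

end Fibers

section Partner

variable {n : ℕ}

noncomputable def partner (M : Edges n) (v : Fin n) : Fin n :=
  if h : ∃ e ∈ M, v ∈ e then Sym2.Mem.other h.choose_spec.2 else v

variable {M : Edges n} {v : Fin n}

lemma filter_mem_eq_singleton_partner (h : edeg M v = 1) :
    M.filter (v ∈ ·) = {s(v, partner M v)} := by
  obtain ⟨e, he⟩ := Multiset.card_eq_one.1 h
  have hex : ∃ e ∈ M, v ∈ e := ⟨e, Multiset.mem_filter.1 (he ▸ Multiset.mem_singleton_self e)⟩
  have hchoose : hex.choose ∈ M.filter (v ∈ ·) := Multiset.mem_filter.2 hex.choose_spec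
  change M.filter (v ∈ ·) = {e} at he
  rw [he, Multiset.mem_singleton] at hchoose
  rw [he, partner, dif_pos hex, Sym2.other_spec, hchoose]

lemma mk_partner_mem (h : edeg M v = 1) : s(v, partner M v) ∈ M :=
  (Multiset.mem_filter.1 ((filter_mem_eq_singleton_partner h).symm ▸
    Multiset.mem_singleton_self _)).1

lemma eq_partner_of_mk_mem (h : edeg M v = 1) {u : Fin n} (hu : s(v, u) ∈ M) :
    u = partner M v := by
  have hmem : s(v, u) ∈ M.filter (v ∈ ·) := Multiset.mem_filter.2 ⟨hu, Sym2.mem_mk_left v u⟩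
  rw [filter_mem_eq_singleton_partner h, Multiset.mem_singleton] at hmem
  exact Sym2.congr_right.1 hmem

lemma partner_ne (hM : Loopless M) (h : edeg M v = 1) : partner M v ≠ v :=
  (hM.ne (mk_partner_mem h)).symm

lemma partner_partner (h : edeg M v = 1) (h' : edeg M (partner M v) = 1) :
    partner M (partner M v) = v :=
  (eq_partner_of_mk_mem h' (Sym2.eq_swap ▸ mk_partner_mem h)).symm

variable {S : Finset (Fin n)}

lemma IsPMOn.partner_mem (hM : IsPMOn S M) (hv : v ∈ S) : partner M v ∈ S := by
  by_contra hc
  exact edeg_ne_zero_of_mem (mk_partner_mem (hM.2.1 v hv)) (Sym2.mem_mk_right _ _) (hM.2.2 _ hc)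

lemma IsPMOn.ext_partner {M' : Edges n} (hM : IsPMOn S M) (hM' : IsPMOn S M')
    (h : ∀ v ∈ S, partner M v = partner M' v) : M = M' := by
  ext e
  induction e with
  | h a b =>
    by_cases haS : a ∈ S
    · have hcount (N : Edges n) : N.count s(a, b) = (N.filter (a ∈ ·)).count s(a, b) := by
        rw [Multiset.count_filter_of_pos (p := (a ∈ ·)) (Sym2.mem_mk_left a b)]
      rw [hcount M, hcount M', filter_mem_eq_singleton_partner (hM.2.1 a haS),
        filter_mem_eq_singleton_partner (hM'.2.1 a haS), h a haS]
    · have hnot {N : Edges n} (hN : IsPMOn S N) : s(a, b) ∉ N := fun hab =>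
        edeg_ne_zero_of_mem hab (Sym2.mem_mk_left a b) (hN.2.2 a haS)
      rw [Multiset.count_eq_zero.2 (hnot hM), Multiset.count_eq_zero.2 (hnot hM')]

end Partner

section Splitting

variable {n : ℕ}

lemma Reach.edeg_ne_zero {E : Edges n} {u v : Fin n} (hr : Reach E u v) (hu : edeg E u ≠ 0) :
    edeg E v ≠ 0 := by
  induction hr with
  | refl => exact hu
  | tail _ hadj _ => exact edeg_ne_zero_of_mem hadj.2 (Sym2.mem_mk_right _ _)

lemma reach_add_iff_of_disjoint {H K : Edges n} (hdisj : ∀ w, edeg H w = 0 ∨ edeg K w = 0)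
    {v u : Fin n} (hv : edeg H v = 0) : Reach (H + K) v u ↔ Reach K v u := by
  refine ⟨fun hr => ?_, Reach.mono (Multiset.le_add_left _ _)⟩
  suffices Reach K v u ∧ edeg H u = 0 from this.1
  induction hr with
  | refl => exact ⟨.refl, hv⟩
  | tail _ hadj ih =>
    rcases Multiset.mem_add.1 hadj.2 with h | h
    · exact absurd ih.2 (edeg_ne_zero_of_mem h (Sym2.mem_mk_left _ _))
    · exact ⟨ih.1.tail ⟨hadj.1, h⟩, (hdisj _).resolve_right
        (edeg_ne_zero_of_mem h (Sym2.mem_mk_right _ _))⟩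

/-- Handshake parity: a graph has an even number of odd-degree vertices. -/
lemma edeg_eq_one_of_even_card {A : Edges n} (hA : Loopless A) {T : Finset (Fin n)}
    (hT : Even T.card) {b : Fin n} (hb : b ∈ T) (hAb : edeg A b ≤ 1)
    (hA1 : ∀ v ∈ T, v ≠ b → edeg A v = 1) (hA0 : ∀ v ∉ T, edeg A v = 0) :
    edeg A b = 1 := by
  have hsum : ∑ v, edeg A v = edeg A b + (T.card - 1) := by
    rw [← Finset.sum_subset (Finset.subset_univ T) (fun v _ hv => hA0 v hv),
      ← Finset.add_sum_erase _ _ hb,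
      Finset.sum_congr rfl fun v hv =>
        hA1 v (Finset.mem_of_mem_erase hv) (Finset.ne_of_mem_erase hv),
      Finset.sum_const, smul_eq_mul, mul_one, Finset.card_erase_of_mem hb]
  have hpos := Finset.card_pos.2 ⟨b, hb⟩
  obtain ⟨k, hk⟩ := hT
  have := sum_edeg hA
  omega

lemma exists_mem_of_edeg_ne_zero {E : Edges n} {v : Fin n} (h : edeg E v ≠ 0) :
    ∃ u, s(v, u) ∈ E := by
  obtain ⟨e, he⟩ := Multiset.card_pos_iff_exists_mem.1 (Nat.pos_of_ne_zero h)
  obtain ⟨heE, hve⟩ := Multiset.mem_filter.1 he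
  obtain ⟨u, rfl⟩ := Sym2.mem_iff_exists.1 hve
  exact ⟨u, heE⟩

/-- `A + B` is a path from `x` to `y` whose edges alternate between `A` (the colour of the first
edge) and `B`, and `R` is the rest of `G`. -/
def IsAlternatingPathSplit (G A B R : Edges n) (x y : Fin n) : Prop :=
  G = A + B + R ∧ edeg A x = 1 ∧ edeg B x = 0 ∧ (∀ v, v ≠ x → v ≠ y → edeg A v = edeg B v) ∧
    edeg R x = 0 ∧ edeg R y = 0 ∧ ∀ v, edeg (A + B) v ≠ 0 → Reach (A + B) x v

lemma isAlternatingPathSplit_edge {R : Edges n} {x y : Fin n} (hxy : x ≠ y) (hx : edeg R x = 0)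
    (hy : edeg R y = 0) : IsAlternatingPathSplit (s(x, y) ::ₘ R) {s(x, y)} 0 R x y := by
  refine ⟨by rw [add_zero, Multiset.singleton_add], by simp [edeg_singleton], rfl,
    fun v hvx hvy => by simp [edeg_singleton, hvx, hvy], hx, hy, fun v hv => ?_⟩
  rw [add_zero, edeg_singleton] at hv
  have hvxy : v ∈ s(x, y) := by by_contra h; simp [h] at hv
  rcases Sym2.mem_iff.1 hvxy with rfl | rfl
  exacts [.refl, .single ⟨hxy, Multiset.mem_singleton_self _⟩]

lemma IsAlternatingPathSplit.cons {G A B R : Edges n} {x y z : Fin n}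
    (h : IsAlternatingPathSplit G A B R z y) (hx : edeg G x = 0) (hxz : x ≠ z) :
    IsAlternatingPathSplit (s(x, z) ::ₘ G) (s(x, z) ::ₘ B) A R x y := by
  obtain ⟨hsplit, hAz, hBz, hAB, _, hRy, hreach⟩ := h
  have hle {E : Edges n} (hE : E ≤ G) : edeg E x = 0 :=
    Nat.eq_zero_of_le_zero (hx ▸ edeg_mono hE x)
  have hxz' : Reach (s(x, z) ::ₘ B + A) x z :=
    .single ⟨hxz, Multiset.mem_add.2 (.inl (Multiset.mem_cons_self _ _))⟩
  refine ⟨?_, ?_, hle (hsplit ▸ (Multiset.le_add_right _ _).trans (Multiset.le_add_right _ _)),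
    fun v hvx hvy => ?_, hle (hsplit ▸ Multiset.le_add_left _ _), hRy, fun v hv => ?_⟩
  · rw [hsplit, Multiset.cons_add, Multiset.cons_add, add_comm A B]
  · rw [edeg_cons, hle (hsplit ▸ (Multiset.le_add_left _ _).trans (Multiset.le_add_right _ _))]
    simp
  · rw [edeg_cons]
    by_cases hvz : v = z
    · subst hvz; simp [hAz, hBz]
    · simp [Sym2.mem_iff, hvx, hvz, hAB v hvz hvy]
  · rw [edeg_add, edeg_cons] at hv
    by_cases hvxz : v ∈ s(x, z)
    · rcases Sym2.mem_iff.1 hvxz with rfl | rfl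
      exacts [.refl, hxz']
    · refine hxz'.trans (Reach.mono ?_ (hreach v ?_))
      · rw [Multiset.cons_add, add_comm A B]
        exact Multiset.le_cons_self _ _
      · rw [edeg_add]
        simp only [hvxz, if_false] at hv
        omega

lemma exists_isAlternatingPathSplit (G : Edges n) (hG : Loopless G) {x y : Fin n} (hxy : x ≠ y)
    (hx : edeg G x = 1) (hy : edeg G y = 1)
    (hdeg : ∀ v, v ≠ x → v ≠ y → edeg G v = 0 ∨ edeg G v = 2) :
    ∃ A B R : Edges n, IsAlternatingPathSplit G A B R x y := by
  induction G using Multiset.strongInductionOn generalizing x with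
  | ih G ih =>
  obtain ⟨z, hxz⟩ := exists_mem_of_edeg_ne_zero (hx ▸ one_ne_zero)
  have hdegG := edeg_eq_add_edeg_erase hxz
  rw [← Multiset.cons_erase hxz]
  set G' := G.erase s(x, z)
  have hG'x : edeg G' x = 0 := by simpa [hx] using (hdegG x).symm
  by_cases hzy : z = y
  · subst hzy
    exact ⟨_, _, _, isAlternatingPathSplit_edge hxy hG'x (by simpa [hxy, hy] using (hdegG z).symm)⟩
  have hzx : z ≠ x := (hG.ne hxz).symm
  have hG'z : edeg G' z = 1 := by
    have := hdegG z
    rcases hdeg z hzx hzy with h | h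
    · exact absurd h (edeg_ne_zero_of_mem hxz (Sym2.mem_mk_right _ _))
    · simp only [Sym2.mem_iff, or_true, ↓reduceIte] at this; omega
  have hG'y : edeg G' y = 1 := edeg_erase_of_notMem hxz hxy.symm (Ne.symm hzy) ▸ hy
  have hdeg' (v : Fin n) (hvz : v ≠ z) (hvy : v ≠ y) : edeg G' v = 0 ∨ edeg G' v = 2 := by
    by_cases hvx : v = x
    · exact .inl (hvx ▸ hG'x)
    · exact edeg_erase_of_notMem hxz hvx hvz ▸ hdeg v hvx hvy
  obtain ⟨A, B, R, h⟩ :=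
    ih G' (Multiset.erase_lt.2 hxz) (hG.mono (Multiset.erase_le _ _)) hzy hG'z hG'y hdeg'
  exact ⟨_, _, _, h.cons hG'x hzx.symm⟩

lemma setOf_reach_add_eq_support {H R : Edges n} (hdisj : ∀ v, edeg H v = 0 ∨ edeg R v = 0)
    {a : Fin n} (ha : edeg H a ≠ 0) (hconn : ∀ v, edeg H v ≠ 0 → Reach H a v) :
    {u | Reach (H + R) a u} = ↑(Finset.univ.filter (edeg H · ≠ 0)) := by
  ext u
  rw [Set.mem_ofPred_eq, Finset.coe_filter, Set.mem_ofPred_eq, add_comm,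
    reach_add_iff_of_disjoint (fun w => (hdisj w).symm) ((hdisj a).resolve_left ha)]
  exact ⟨fun hr => ⟨Finset.mem_univ u, hr.edeg_ne_zero ha⟩, fun hu => hconn u hu.2⟩

lemma IsAlternatingPathSplit.edeg_le_one {E A B R : Edges n} {x y : Fin n}
    (h : IsAlternatingPathSplit E A B R x y)
    (hdeg : ∀ v, v ≠ x → v ≠ y → edeg E v = 0 ∨ edeg E v = 2) {v : Fin n} (hvx : v ≠ x)
    (hvy : v ≠ y) : edeg A v ≤ 1 ∧ (edeg A v = 0 ∨ edeg R v = 0) := by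
  have hE : edeg E v = edeg A v + edeg B v + edeg R v := by rw [h.1, edeg_add, edeg_add]
  have := h.2.2.2.1 v hvx hvy
  rcases hdeg v hvx hvy with h | h <;> omega

lemma exists_isAlternatingPathSplit_erase {G : Edges n} (hG : Loopless G)
    (hdeg : ∀ v, edeg G v = 0 ∨ edeg G v = 2) {a b : Fin n} (hab : s(a, b) ∈ G) :
    ∃ A B R : Edges n, IsAlternatingPathSplit (G.erase s(a, b)) A B R a b := by
  have hG₁ (v : Fin n) (hv : v ∈ s(a, b)) : edeg (G.erase s(a, b)) v = 1 := by
    have := edeg_eq_add_edeg_erase hab v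
    rw [if_pos hv, (hdeg v).resolve_left (edeg_ne_zero_of_mem hab hv)] at this
    omega
  exact exists_isAlternatingPathSplit _ (hG.mono (Multiset.erase_le _ _)) (hG.ne hab)
    (hG₁ a (Sym2.mem_mk_left a b)) (hG₁ b (Sym2.mem_mk_right a b))
    fun v hva hvb => edeg_erase_of_notMem hab hva hvb ▸ hdeg v

/-- Closing the alternating path by the edge `s(a, b)` gives an even cycle, so its last edge,
like its first, lies in `A`. -/
lemma IsAlternatingPathSplit.edeg_eq_one_of_even {G A B R : Edges n} {a b : Fin n}
    (h : IsAlternatingPathSplit (G.erase s(a, b)) A B R a b) (hG : Loopless G)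
    (hdeg : ∀ v, edeg G v = 0 ∨ edeg G v = 2) (hab : s(a, b) ∈ G)
    (hEv : Even {u | Reach G a u}.ncard) : edeg A b = 1 := by
  have hinner := fun v (hva : v ≠ a) (hvb : v ≠ b) =>
    h.edeg_le_one (fun v hva hvb => edeg_erase_of_notMem hab hva hvb ▸ hdeg v) hva hvb
  obtain ⟨hsplit, hAa, -, hAB, hRa, hRb, hreach⟩ := h
  have hGHR : G = s(a, b) ::ₘ (A + B) + R := by
    rw [Multiset.cons_add, ← hsplit, Multiset.cons_erase hab]
  set H := s(a, b) ::ₘ (A + B) with hH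
  have hdegH (v : Fin n) : edeg H v = (if v ∈ s(a, b) then 1 else 0) + edeg A v + edeg B v := by
    rw [hH, edeg_cons, edeg_add, add_assoc]
  have hdegH' (v : Fin n) (hva : v ≠ a) (hvb : v ≠ b) : edeg H v = 2 * edeg A v := by
    rw [hdegH, if_neg (by simp [Sym2.mem_iff, hva, hvb]), hAB v hva hvb]; ring
  have hdisj (v : Fin n) : edeg H v = 0 ∨ edeg R v = 0 := by
    by_cases hva : v = a; · exact .inr (hva ▸ hRa)
    by_cases hvb : v = b; · exact .inr (hvb ▸ hRb)
    have := hinner v hva hvb; have := hdegH' v hva hvb; omega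
  have hT := setOf_reach_add_eq_support hdisj (R := R) (a := a)
    (edeg_ne_zero_of_mem (Multiset.mem_cons_self _ _) (Sym2.mem_mk_left _ _)) fun u hu => by
      by_cases hua : u = a; · exact hua ▸ .refl
      by_cases hub : u = b; · exact hub ▸ .single ⟨hG.ne hab, Multiset.mem_cons_self _ _⟩
      refine Reach.mono (Multiset.le_cons_self _ _) (hreach u ?_)
      rw [edeg_add]; have := hdegH' u hua hub; omega
  have hAb_le : edeg A b ≤ 1 := by
    have := edeg_mono (hsplit ▸ (Multiset.le_add_right _ _).trans (Multiset.le_add_right _ _)) b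
    have := edeg_eq_add_edeg_erase hab b
    rw [if_pos (Sym2.mem_mk_right a b),
      (hdeg b).resolve_left (edeg_ne_zero_of_mem hab (Sym2.mem_mk_right a b))] at this
    omega
  refine edeg_eq_one_of_even_card (hG.mono (hGHR ▸ (Multiset.le_add_right _ _).trans
      ((Multiset.le_cons_self _ _).trans (Multiset.le_add_right _ _))))
    (by rwa [hGHR, hT, Set.ncard_coe_finset] at hEv) (by simp [hdegH]) hAb_le
    (fun v hv hvb => ?_) (fun v hv => ?_)
  · by_cases hva : v = a; · exact hva ▸ hAa
    have := hinner v hva hvb; have := hdegH' v hva hvb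
    simp only [Finset.mem_filter, Finset.mem_univ, true_and] at hv; omega
  · simp only [Finset.mem_filter, Finset.mem_univ, true_and, not_not] at hv
    have := hdegH v; omega

lemma exists_even_cycle_split {G : Edges n} (hG : Loopless G)
    (hdeg : ∀ v, edeg G v = 0 ∨ edeg G v = 2) {a b : Fin n} (hab : s(a, b) ∈ G)
    (hEv : Even {u | Reach G a u}.ncard) :
    ∃ M₁ M₂ R : Edges n, G = M₁ + M₂ + R ∧ R < G ∧ (∀ v, edeg M₁ v = edeg M₂ v) ∧
      ∀ v, edeg M₂ v = 0 ∨ edeg R v = 0 := by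
  obtain ⟨A, B, R, h⟩ := exists_isAlternatingPathSplit_erase hG hdeg hab
  have hAb := h.edeg_eq_one_of_even hG hdeg hab hEv
  have hinner := fun v (hva : v ≠ a) (hvb : v ≠ b) =>
    h.edeg_le_one (fun v hva hvb => edeg_erase_of_notMem hab hva hvb ▸ hdeg v) hva hvb
  obtain ⟨hsplit, hAa, hBa, hAB, hRa, hRb, -⟩ := h
  have hBb : edeg B b = 0 := by
    have := edeg_mono (hsplit ▸ (Multiset.le_add_left _ _).trans (Multiset.le_add_right _ _)) b
    have := edeg_eq_add_edeg_erase hab b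
    rw [if_pos (Sym2.mem_mk_right a b),
      (hdeg b).resolve_left (edeg_ne_zero_of_mem hab (Sym2.mem_mk_right a b)), hsplit,
      edeg_add, edeg_add] at this
    omega
  refine ⟨A, s(a, b) ::ₘ B, R, ?_, ?_, fun v => ?_, fun v => ?_⟩
  · rw [← Multiset.cons_erase hab, hsplit]
    simp only [Multiset.cons_add, Multiset.add_cons]
  · conv_rhs => rw [← Multiset.cons_erase hab, hsplit]
    exact (Multiset.le_add_left _ _).trans_lt (Multiset.lt_cons_self _ _)
  · rw [edeg_cons]
    by_cases hva : v = a; · subst hva; simp [hAa, hBa]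
    by_cases hvb : v = b; · subst hvb; simp [hAb, hBb]
    simp [Sym2.mem_iff, hva, hvb, hAB v hva hvb]
  · rw [edeg_cons]
    by_cases hva : v = a; · exact .inr (hva ▸ hRa)
    by_cases hvb : v = b; · exact .inr (hvb ▸ hRb)
    have := hinner v hva hvb; have := hAB v hva hvb
    simp only [Sym2.mem_iff, hva, hvb, or_self, if_false, zero_add]; omega

lemma exists_split_of_even_components (G : Edges n) (hG : Loopless G)
    (hdeg : ∀ v, edeg G v = 0 ∨ edeg G v = 2)
    (hEv : ∀ v, edeg G v = 2 → Even {u | Reach G v u}.ncard) :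
    ∃ M₁ M₂ : Edges n, G = M₁ + M₂ ∧ ∀ v, edeg M₁ v = edeg M₂ v := by
  induction G using Multiset.strongInductionOn with
  | ih G ih =>
  rcases Multiset.empty_or_exists_mem G with rfl | ⟨e, he⟩
  · exact ⟨0, 0, rfl, fun _ => rfl⟩
  induction e with
  | h a b =>
  obtain ⟨M₁, M₂, R, hsplit, hR, hM, hdisj⟩ := exists_even_cycle_split hG hdeg he
    (hEv a ((hdeg a).resolve_left (edeg_ne_zero_of_mem he (Sym2.mem_mk_left a b))))
  have hdegG (v : Fin n) : edeg G v = edeg M₁ v + edeg M₂ v + edeg R v := by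
    rw [hsplit, edeg_add, edeg_add]
  have hdisj' (v : Fin n) : edeg (M₁ + M₂) v = 0 ∨ edeg R v = 0 := by
    rw [edeg_add, hM]; have := hdisj v; omega
  have hRdeg (v : Fin n) : edeg R v = 0 ∨ edeg R v = 2 := by
    have := hdegG v; have := hdeg v; have := hdisj' v; rw [edeg_add] at this; omega
  have hREv (v : Fin n) (hv : edeg R v = 2) : Even {u | Reach R v u}.ncard := by
    have hv' : edeg (M₁ + M₂) v = 0 := (hdisj' v).resolve_right (by omega)
    have := hEv v (by have := hdegG v; rw [edeg_add] at hv'; omega)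
    simpa only [hsplit, reach_add_iff_of_disjoint hdisj' hv'] using this
  obtain ⟨N₁, N₂, rfl, hN⟩ := ih R hR (hG.mono hR.le) hRdeg hREv
  refine ⟨M₁ + N₁, M₂ + N₂, ?_, fun v => by rw [edeg_add, edeg_add, hM, hN]⟩
  rw [hsplit]; abel

lemma TwoRegular.exists_isPM_add {G : Edges n} (hG : TwoRegular G) (hEv : EvenCycles G) :
    ∃ M₁ M₂ : Edges n, G = M₁ + M₂ ∧ IsPM M₁ ∧ IsPM M₂ := by
  obtain ⟨M₁, M₂, rfl, hM⟩ := exists_split_of_even_components _ hG.1 (fun v => .inr (hG.2 v))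
    (fun v _ => hEv v)
  have hdeg (v : Fin n) : edeg M₁ v = 1 ∧ edeg M₂ v = 1 := by
    have := hG.2 v; rw [edeg_add] at this; have := hM v; omega
  exact ⟨M₁, M₂, rfl, ⟨hG.1.mono (Multiset.le_add_right _ _), fun v => (hdeg v).1⟩,
    ⟨hG.1.mono (Multiset.le_add_left _ _), fun v => (hdeg v).2⟩⟩

end Splitting

section HamDecomposition

variable {n : ℕ} {C P Q P' Q' : Edges n}

lemma IsHam.count_le_one (hC : IsHam C) (hn : 3 ≤ n) (e : Sym2 (Fin n)) : C.count e ≤ 1 := by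
  by_contra! he
  induction e with
  | h u v =>
  have hclosed (a : Fin n) (ha : a ∈ s(u, v)) (b : Fin n) (hab : s(a, b) ∈ C) : b ∈ s(u, v) := by
    have hrep : Multiset.replicate 2 s(u, v) ≤ C.filter (a ∈ ·) := by
      rw [Multiset.le_iff_count]
      intro f
      by_cases hf : f = s(u, v)
      · rw [hf, Multiset.count_replicate_self, Multiset.count_filter_of_pos (p := (a ∈ ·)) ha]
        exact he
      · rw [Multiset.count_replicate, if_neg (Ne.symm hf)]
        exact Nat.zero_le _
    have hfilter := Multiset.eq_of_le_of_card_le hrep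
      (by rw [Multiset.card_replicate]; exact (hC.2.1 a).le)
    have hmem : s(a, b) ∈ C.filter (a ∈ ·) := Multiset.mem_filter.2 ⟨hab, Sym2.mem_mk_left a b⟩
    rw [← hfilter, Multiset.mem_replicate] at hmem
    exact hmem.2 ▸ Sym2.mem_mk_right a b
  have hstay (w : Fin n) (hw : Reach C u w) : w ∈ s(u, v) := by
    induction hw with
    | refl => exact Sym2.mem_mk_left u v
    | tail _ hadj ih => exact hclosed _ ih _ hadj.2
  obtain ⟨z, hz⟩ : ∃ z, z ∉ ({u, v} : Finset (Fin n)) := by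
    by_contra! h
    have := Finset.card_le_card (fun z _ => h z : Finset.univ ⊆ {u, v})
    rw [Finset.card_univ, Fintype.card_fin] at this
    have := Finset.card_le_two (a := u) (b := v)
    omega
  simp only [Finset.mem_insert, Finset.mem_singleton] at hz
  exact hz (Sym2.mem_iff.1 (hstay z (hC.2.2 u z)))

lemma eq_partner_or_of_mk_mem_add (hP : IsPM P) (hQ : IsPM Q) {v w : Fin n}
    (h : s(v, w) ∈ P + Q) : w = partner P v ∨ w = partner Q v :=
  (Multiset.mem_add.1 h).imp (eq_partner_of_mk_mem (hP.2 v)) (eq_partner_of_mk_mem (hQ.2 v))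

lemma partner_ne_partner_of_count_le_one (hP : IsPM P) (hQ : IsPM Q)
    (hC : ∀ e, (P + Q).count e ≤ 1) (v : Fin n) : partner P v ≠ partner Q v := by
  intro h
  have hP' := Multiset.count_pos.2 (mk_partner_mem (hP.2 v))
  have hQ' := Multiset.count_pos.2 (h ▸ mk_partner_mem (hQ.2 v))
  have := hC s(v, partner P v)
  rw [Multiset.count_add] at this
  omega

/-- Along the cycle `P + Q`, a perfect matching `P' ≤ P + Q` that agrees with `P` at one vertex
must keep agreeing with `P`, since `P'` can take only one of the two edges at each vertex. -/
lemma IsPM.eq_of_le_add (hP : IsPM P) (hQ : IsPM Q) (hP' : IsPM P') (hC : IsHam (P + Q))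
    (hn : 3 ≤ n) (hle : P' ≤ P + Q) {v₀ : Fin n} (h₀ : partner P' v₀ = partner P v₀) :
    P' = P := by
  have hPQ := partner_ne_partner_of_count_le_one hP hQ (hC.count_le_one hn)
  have hstep {v w : Fin n} (hv : partner P' v = partner P v) (hvw : s(v, w) ∈ P + Q) :
      partner P' w = partner P w := by
    have hP'w : s(w, partner P' w) ∈ P + Q := Multiset.mem_of_le hle (mk_partner_mem (hP'.2 w))
    rcases eq_partner_or_of_mk_mem_add hP hQ hvw with rfl | rfl
    · rw [partner_partner (hP.2 v) (hP.2 _), ← hv, partner_partner (hP'.2 v) (hP'.2 _)]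
    · refine (eq_partner_or_of_mk_mem_add hP hQ hP'w).resolve_right fun h => hPQ v ?_
      rw [partner_partner (hQ.2 v) (hQ.2 _)] at h
      rw [← hv, ← eq_partner_of_mk_mem (hP'.2 v) (Sym2.eq_swap ▸ h ▸ mk_partner_mem (hP'.2 _))]
  have hagree (w : Fin n) : partner P' w = partner P w := by
    induction hC.2.2 v₀ w with
    | refl => exact h₀
    | tail _ hadj ih => exact hstep ih hadj.2
  exact (isPMOn_univ_iff.2 hP').ext_partner (isPMOn_univ_iff.2 hP) fun w _ => hagree w

lemma IsHam.eq_or_eq_of_add_eq (hC : IsHam (P + Q)) (hn : 3 ≤ n) (hP : IsPM P) (hQ : IsPM Q)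
    (hP' : IsPM P') (h : P' + Q' = P + Q) :
    (P' = P ∧ Q' = Q) ∨ (P' = Q ∧ Q' = P) := by
  have v₀ : Fin n := ⟨0, by omega⟩
  have hle : P' ≤ P + Q := h ▸ Multiset.le_add_right _ _
  rcases eq_partner_or_of_mk_mem_add hP hQ (Multiset.mem_of_le hle (mk_partner_mem (hP'.2 v₀)))
    with h₀ | h₀
  · have := hP.eq_of_le_add hQ hP' hC hn hle h₀
    subst this
    exact .inl ⟨rfl, add_left_cancel h⟩
  · rw [add_comm P Q] at hC hle h
    have := hQ.eq_of_le_add hP hP' hC hn hle h₀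
    subst this
    exact .inr ⟨rfl, add_left_cancel h⟩

end HamDecomposition

section Completions

variable {n : ℕ} {S : Finset (Fin n)} {A Z : Edges n} {a b w x y p q : Fin n}

def hamCompletions (S : Finset (Fin n)) (L : List (Edges n)) : Set (Edges n) :=
  {N | IsPMOn S N ∧ ∀ A ∈ L, IsHamOn S (A + N)}

lemma IsPMOn.card_le {N : Edges n} (h : IsPMOn S N) : Multiset.card N ≤ n := by
  have hle : ∑ v, edeg N v ≤ ∑ _v : Fin n, 1 := Finset.sum_le_sum fun v _ => by
    by_cases hv : v ∈ S
    · exact (h.2.1 v hv).le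
    · exact (h.2.2 v hv).trans_le zero_le_one
  rw [sum_edeg h.1, Finset.sum_const, Finset.card_univ, Fintype.card_fin, smul_eq_mul,
    mul_one] at hle
  omega

lemma hamCompletions_finite (S : Finset (Fin n)) (L : List (Edges n)) :
    (hamCompletions S L).Finite :=
  (finite_setOf_card_le n).subset fun _ hN => hN.1.card_le

lemma zero_mem_hamCompletions_empty {L : List (Edges n)} (hL : ∀ A ∈ L, IsPMOn ∅ A) :
    0 ∈ hamCompletions ∅ L := by
  refine ⟨⟨by simp [Loopless], by simp, fun _ _ => rfl⟩, fun A hA => ?_⟩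
  rw [add_zero]
  exact ⟨(hL A hA).1, by simp, (hL A hA).2.2, by simp⟩

lemma isPMOn_pair (hab : a ≠ b) : IsPMOn {a, b} {s(a, b)} := by
  refine ⟨by simpa [Loopless] using hab, fun v hv => ?_, fun v hv => ?_⟩ <;>
    simp only [Finset.mem_insert, Finset.mem_singleton] at hv <;>
    simp [edeg_singleton, Sym2.mem_iff, hv]

lemma IsPMOn.partner_of_pair {M : Edges n} (hM : IsPMOn {a, b} M) :
    partner M a = b := by
  have hmem := hM.partner_mem (Finset.mem_insert_self a {b})
  simp only [Finset.mem_insert, Finset.mem_singleton] at hmem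
  exact hmem.resolve_left (partner_ne hM.1 (hM.2.1 a (Finset.mem_insert_self a {b})))

lemma IsPMOn.eq_singleton_of_pair {M : Edges n} (hM : IsPMOn {a, b} M) (hab : a ≠ b) :
    M = {s(a, b)} := by
  have hM' : IsPMOn {b, a} M := Finset.pair_comm a b ▸ hM
  have hpair' : IsPMOn {b, a} {s(a, b)} := Finset.pair_comm a b ▸ isPMOn_pair hab
  refine hM.ext_partner (isPMOn_pair hab) fun v hv => ?_
  simp only [Finset.mem_insert, Finset.mem_singleton] at hv
  rcases hv with rfl | rfl
  · rw [hM.partner_of_pair, (isPMOn_pair hab).partner_of_pair]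
  · rw [hM'.partner_of_pair, hpair'.partner_of_pair]

lemma singleton_mem_hamCompletions_pair (hab : a ≠ b) {L : List (Edges n)}
    (hL : ∀ A ∈ L, IsPMOn {a, b} A) : {s(a, b)} ∈ hamCompletions {a, b} L := by
  refine ⟨isPMOn_pair hab, fun A hA => ?_⟩
  rw [(hL A hA).eq_singleton_of_pair hab, Multiset.singleton_add]
  have hdeg (v : Fin n) : edeg (s(a, b) ::ₘ {s(a, b)}) v = 2 * edeg {s(a, b)} v := by
    rw [edeg_cons, edeg_singleton]; split <;> rfl
  refine ⟨?_, fun v hv => ?_, fun v hv => ?_, fun u hu v hv => ?_⟩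
  · simpa [Loopless] using hab
  · rw [hdeg, (isPMOn_pair hab).2.1 v hv]
  · rw [hdeg, (isPMOn_pair hab).2.2 v hv]
  · simp only [Finset.mem_insert, Finset.mem_singleton] at hu hv
    have hab' : EAdj (s(a, b) ::ₘ {s(a, b)}) a b := ⟨hab, Multiset.mem_cons_self _ _⟩
    rcases hu with rfl | rfl <;> rcases hv with rfl | rfl
    exacts [.refl, .single hab', .single hab'.symm, .refl]

def subdivide (Z : Edges n) (x y p q : Fin n) : Edges n :=
  s(x, p) ::ₘ s(p, q) ::ₘ s(q, y) ::ₘ Z.erase s(x, y)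

lemma reach_subdivide (hxy : s(x, y) ∈ Z) {u v : Fin n} (h : Reach Z u v)
    (hpx : p ≠ x) (hpq : p ≠ q) (hqy : q ≠ y) : Reach (subdivide Z x y p q) u v := by
  have hpath : Reach (subdivide Z x y p q) x y :=
    ((Relation.ReflTransGen.single ⟨hpx.symm, by simp [subdivide]⟩).tail
      ⟨hpq, by simp [subdivide]⟩).tail ⟨hqy, by simp [subdivide]⟩
  induction h with
  | refl => exact .refl
  | @tail b c _ hbc ih =>
    by_cases he : s(b, c) = s(x, y)
    · rcases Sym2.eq_iff.1 he with ⟨rfl, rfl⟩ | ⟨rfl, rfl⟩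
      exacts [ih.trans hpath, ih.trans hpath.symm]
    · exact ih.tail ⟨hbc.1, by simp [subdivide, (Multiset.mem_erase_of_ne he).2 hbc.2]⟩

lemma edeg_subdivide (hxy : s(x, y) ∈ Z) (v : Fin n) :
    edeg (subdivide Z x y p q) v + (if v ∈ s(x, y) then 1 else 0) =
      (if v ∈ s(x, p) then 1 else 0) + (if v ∈ s(p, q) then 1 else 0) +
        (if v ∈ s(q, y) then 1 else 0) + edeg Z v := by
  rw [edeg_eq_add_edeg_erase hxy v]
  simp only [subdivide, edeg_cons]
  ring

lemma IsHamOn.mem_of_mem_edge (hZ : IsHamOn S Z) {e : Sym2 (Fin n)} (he : e ∈ Z) {v : Fin n}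
    (hv : v ∈ e) : v ∈ S := by
  by_contra h
  exact edeg_ne_zero_of_mem he hv (hZ.2.2.1 v h)

lemma isHamOn_subdivide (hZ : IsHamOn S Z) (hxy : s(x, y) ∈ Z) (hp : p ∉ S) (hq : q ∉ S)
    (hpq : p ≠ q) : IsHamOn (insert p (insert q S)) (subdivide Z x y p q) := by
  have hx : x ∈ S := hZ.mem_of_mem_edge hxy (Sym2.mem_mk_left x y)
  have hy : y ∈ S := hZ.mem_of_mem_edge hxy (Sym2.mem_mk_right x y)
  have hxy' : x ≠ y := hZ.1.ne hxy
  have hpx : p ≠ x := fun h => hp (h ▸ hx)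
  have hpy : p ≠ y := fun h => hp (h ▸ hy)
  have hqx : q ≠ x := fun h => hq (h ▸ hx)
  have hqy : q ≠ y := fun h => hq (h ▸ hy)
  have hdeg_old (v : Fin n) (hvp : v ≠ p) (hvq : v ≠ q) :
      edeg (subdivide Z x y p q) v = edeg Z v := by
    have := edeg_subdivide hxy (p := p) (q := q) v
    by_cases hvx : v = x
    · subst hvx
      simp only [Sym2.mem_iff, hxy', hvp, hvq, or_false, or_self, ↓reduceIte, add_zero] at this
      omega
    by_cases hvy : v = y
    · subst hvy
      simp only [Sym2.mem_iff, hvx, hvp, hvq, or_true, or_self, ↓reduceIte, add_zero,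
        zero_add] at this
      omega
    simp only [Sym2.mem_iff, hvx, hvy, hvp, hvq, or_self, ↓reduceIte, add_zero, zero_add] at this
    omega
  have hdeg_new (v : Fin n) (hv : v = p ∨ v = q) : edeg (subdivide Z x y p q) v = 2 := by
    have := edeg_subdivide hxy (p := p) (q := q) v
    have hvS : v ∉ S := by rcases hv with rfl | rfl <;> assumption
    have hvx : v ≠ x := fun h => hvS (h ▸ hx)
    have hvy : v ≠ y := fun h => hvS (h ▸ hy)
    rw [hZ.2.2.1 v hvS] at this
    rcases hv with rfl | rfl <;>
      simp only [Sym2.mem_iff, hvx, hvy, hpq, hpq.symm, or_self, or_true, or_false, ↓reduceIte,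
        add_zero, zero_add] at this <;> omega
  have hreach (u : Fin n) (hu : u ∈ insert p (insert q S)) : Reach (subdivide Z x y p q) x u := by
    have hxp : Reach (subdivide Z x y p q) x p := .single ⟨hpx.symm, by simp [subdivide]⟩
    simp only [Finset.mem_insert] at hu
    rcases hu with rfl | rfl | hu
    · exact hxp
    · exact hxp.tail ⟨hpq, by simp [subdivide]⟩
    · exact reach_subdivide hxy (hZ.2.2.2 x hx u hu) hpx hpq hqy
  refine ⟨fun e he => ?_, fun v hv => ?_, fun v hv => ?_,
    fun u hu w hw => (hreach u hu).symm.trans (hreach w hw)⟩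
  · simp only [subdivide, Multiset.mem_cons] at he
    rcases he with rfl | rfl | rfl | he
    · exact Sym2.mk_isDiag_iff.not.2 hpx.symm
    · exact Sym2.mk_isDiag_iff.not.2 hpq
    · exact Sym2.mk_isDiag_iff.not.2 hqy
    · exact hZ.1 e (Multiset.mem_of_mem_erase he)
  · simp only [Finset.mem_insert] at hv
    rcases hv with rfl | rfl | hv
    · exact hdeg_new _ (.inl rfl)
    · exact hdeg_new _ (.inr rfl)
    · rw [hdeg_old v (fun h => hp (h ▸ hv)) (fun h => hq (h ▸ hv)), hZ.2.1 v hv]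
  · simp only [Finset.mem_insert, not_or] at hv
    rw [hdeg_old v hv.1 hv.2.1, hZ.2.2.1 v hv.2.2]

/-- The matching induced by `A` on `S \ {a, w}` once the path `partner A a, a, w, partner A w`
is shortcut by a single edge. -/
noncomputable def contract (A : Edges n) (a w : Fin n) : Edges n :=
  s(partner A a, partner A w) ::ₘ (A.erase s(a, partner A a)).erase s(w, partner A w)

lemma IsPMOn.partner_injOn (hA : IsPMOn S A) {u v : Fin n} (hu : u ∈ S) (hv : v ∈ S)
    (h : partner A u = partner A v) : u = v := by
  rw [← partner_partner (hA.2.1 u hu) (hA.2.1 _ (hA.partner_mem hu)), h,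
    partner_partner (hA.2.1 v hv) (hA.2.1 _ (hA.partner_mem hv))]

lemma IsPMOn.eq_cons_cons_erase (hA : IsPMOn S A) (ha : a ∈ S) (hw : w ∈ S) (hwa : w ≠ a)
    (hwp : w ≠ partner A a) :
    A = s(a, partner A a) ::ₘ s(w, partner A w) ::ₘ
      (A.erase s(a, partner A a)).erase s(w, partner A w) := by
  have hne : s(w, partner A w) ≠ s(a, partner A a) := by
    rw [Ne, Sym2.eq_iff, not_or, not_and, not_and]
    exact ⟨fun h => absurd h hwa, fun h => absurd h hwp⟩
  rw [Multiset.cons_erase ((Multiset.mem_erase_of_ne hne).2 (mk_partner_mem (hA.2.1 w hw))),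
    Multiset.cons_erase (mk_partner_mem (hA.2.1 a ha))]

lemma IsPMOn.contract (hA : IsPMOn S A) (ha : a ∈ S) (hw : w ∈ S) (hwa : w ≠ a)
    (hwp : w ≠ partner A a) : IsPMOn (S \ {a, w}) (contract A a w) := by
  set α := partner A a
  set β := partner A w
  set R := (A.erase s(a, α)).erase s(w, β)
  have hαS : α ∈ S := hA.partner_mem ha
  have hβS : β ∈ S := hA.partner_mem hw
  have hαa : α ≠ a := partner_ne hA.1 (hA.2.1 a ha)
  have hβw : β ≠ w := partner_ne hA.1 (hA.2.1 w hw)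
  have hβa : β ≠ a := fun h => hwp (hA.partner_injOn hw hαS
    (by rw [show partner A w = a from h, partner_partner (hA.2.1 a ha) (hA.2.1 α hαS)]))
  have hαβ : α ≠ β := fun h => hwa (hA.partner_injOn ha hw h).symm
  have hdegA (v : Fin n) : edeg A v =
      (if v ∈ s(a, α) then 1 else 0) + (if v ∈ s(w, β) then 1 else 0) + edeg R v := by
    conv_lhs => rw [hA.eq_cons_cons_erase ha hw hwa hwp]
    rw [edeg_cons, edeg_cons, add_assoc]
  have hR : R ≤ A := (Multiset.erase_le _ _).trans (Multiset.erase_le _ _)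
  have hC : _root_.contract A a w = s(α, β) ::ₘ R := rfl
  clear_value α β R
  refine ⟨fun e he => ?_, fun v hv => ?_, fun v hv => ?_⟩
  · rw [hC] at he
    rcases Multiset.mem_cons.1 he with rfl | he
    exacts [Sym2.mk_isDiag_iff.not.2 hαβ, hA.1 e (Multiset.mem_of_le hR he)]
  · simp only [Finset.mem_sdiff, Finset.mem_insert, Finset.mem_singleton, not_or] at hv
    have := hdegA v
    rw [hA.2.1 v hv.1] at this
    rw [hC, edeg_cons]
    by_cases hvα : v = α
    · subst hvα
      simp only [Sym2.mem_iff, hv.2.1, hv.2.2, hαβ, or_true, or_false, or_self, ↓reduceIte,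
        add_zero] at this ⊢
      omega
    by_cases hvβ : v = β
    · subst hvβ
      simp only [Sym2.mem_iff, hv.2.1, hv.2.2, false_or, or_true, ↓reduceIte] at this ⊢
      omega
    simp only [Sym2.mem_iff, hv.2.1, hv.2.2, hvα, hvβ, or_self, ↓reduceIte, add_zero,
      zero_add] at this ⊢
    omega
  · rw [hC, edeg_cons]
    by_cases hvS : v ∈ S
    · simp only [Finset.mem_sdiff, hvS, true_and, not_not, Finset.mem_insert,
        Finset.mem_singleton] at hv
      have := hdegA v
      rw [hA.2.1 v hvS] at this
      rcases hv with rfl | rfl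
      · simp only [Sym2.mem_iff, hαa.symm, hβa.symm, or_false, or_self, ↓reduceIte,
          zero_add] at this ⊢
        omega
      · simp only [Sym2.mem_iff, hwa, hwp, hβw.symm, or_self, or_false, ↓reduceIte,
          zero_add] at this ⊢
        omega
    · have hRv := Nat.le_zero.1 (hA.2.2 v hvS ▸ edeg_mono hR v)
      have hvα : v ≠ α := fun h => hvS (h ▸ hαS)
      have hvβ : v ≠ β := fun h => hvS (h ▸ hβS)
      simp [Sym2.mem_iff, hvα, hvβ, hRv]

lemma IsPMOn.cons_of_sdiff {N : Edges n} (hN : IsPMOn (S \ {a, w}) N) (ha : a ∈ S) (hw : w ∈ S)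
    (hwa : w ≠ a) : IsPMOn S (s(a, w) ::ₘ N) := by
  have hNa : edeg N a = 0 := hN.2.2 a (by simp)
  have hNw : edeg N w = 0 := hN.2.2 w (by simp)
  refine ⟨fun e he => ?_, fun v hv => ?_, fun v hv => ?_⟩
  · rcases Multiset.mem_cons.1 he with rfl | he
    exacts [Sym2.mk_isDiag_iff.not.2 hwa.symm, hN.1 e he]
  · rw [edeg_cons]
    by_cases hva : v = a
    · simp [hva, hNa]
    by_cases hvw : v = w
    · simp [hvw, hNw]
    simp [Sym2.mem_iff, hva, hvw, hN.2.1 v (by simp [hv, hva, hvw])]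
  · have hva : v ≠ a := fun h => hv (h ▸ ha)
    have hvw : v ≠ w := fun h => hv (h ▸ hw)
    rw [edeg_cons]
    simp [Sym2.mem_iff, hva, hvw, hN.2.2 v (by simp [hv])]

lemma insert_insert_sdiff_pair (ha : a ∈ S) (hw : w ∈ S) :
    insert a (insert w (S \ {a, w})) = S := by
  ext v
  by_cases hva : v = a
  · simp [hva, ha]
  by_cases hvw : v = w
  · simp [hvw, hw]
  simp [hva, hvw]

lemma cons_mem_hamCompletions {L : List (Edges n)} (hL : ∀ A ∈ L, IsPMOn S A) (ha : a ∈ S)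
    (hw : w ∈ S) (hwa : w ≠ a) (hwp : ∀ A ∈ L, w ≠ partner A a) {N : Edges n}
    (hN : N ∈ hamCompletions (S \ {a, w}) (L.map (contract · a w))) :
    s(a, w) ::ₘ N ∈ hamCompletions S L := by
  refine ⟨hN.1.cons_of_sdiff ha hw hwa, fun A hA => ?_⟩
  have hZ : IsHamOn (S \ {a, w}) (contract A a w + N) := hN.2 _ (List.mem_map_of_mem hA)
  rw [contract, Multiset.cons_add] at hZ
  have hpath := isHamOn_subdivide hZ (Multiset.mem_cons_self _ _) (p := a) (q := w)
    (by simp) (by simp) hwa.symm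
  rw [subdivide, Multiset.erase_cons_head, insert_insert_sdiff_pair ha hw] at hpath
  convert hpath using 1
  conv_lhs => rw [(hL A hA).eq_cons_cons_erase ha hw hwa (hwp A hA)]
  rw [Sym2.eq_swap (a := partner A a)]
  simp only [Multiset.cons_add, Multiset.add_cons]
  exact Multiset.cons_swap _ _ _

lemma ncard_hamCompletions_contract_le {L : List (Edges n)} (hL : ∀ A ∈ L, IsPMOn S A)
    (ha : a ∈ S) (hw : w ∈ S) (hwa : w ≠ a) (hwp : ∀ A ∈ L, w ≠ partner A a) :
    (hamCompletions (S \ {a, w}) (L.map (contract · a w))).ncard ≤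
      (hamCompletions S L ∩ (partner · a) ⁻¹' {w}).ncard := by
  rw [← Set.ncard_image_of_injective _ fun _ _ h => (Multiset.cons_inj_right s(a, w)).1 h]
  refine Set.ncard_le_ncard ?_ ((hamCompletions_finite S L).inter_of_left _)
  rintro _ ⟨N, hN, rfl⟩
  have hN' := cons_mem_hamCompletions hL ha hw hwa hwp hN
  exact ⟨hN', (eq_partner_of_mk_mem (hN'.1.2.1 a ha) (Multiset.mem_cons_self _ _)).symm⟩

/-- A vertex of `S`, `|S| = k + 3`, may be matched to any of the other `k + 2` vertices except
its partners in the `c` given matchings; the rest is a completion problem on `k + 1` vertices. -/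
def completionBound (c : ℕ) : ℕ → ℕ
  | 0 => 1
  | 1 => 0
  | 2 => 1
  | k + 3 => (k + 2 - c) * completionBound c (k + 1)

theorem completionBound_le_ncard_hamCompletions :
    ∀ (k : ℕ) (S : Finset (Fin n)) (L : List (Edges n)), S.card = k → (∀ A ∈ L, IsPMOn S A) →
      completionBound L.length k ≤ (hamCompletions S L).ncard
  | 0, S, L, hS, hL => by
    rw [Finset.card_eq_zero.1 hS] at hL ⊢
    exact (Set.ncard_pos (hamCompletions_finite _ _)).2 ⟨0, zero_mem_hamCompletions_empty hL⟩
  | 1, _, _, _, _ => Nat.zero_le _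
  | 2, S, L, hS, hL => by
    obtain ⟨a, b, hab, rfl⟩ := Finset.card_eq_two.1 hS
    exact (Set.ncard_pos (hamCompletions_finite _ _)).2
      ⟨_, singleton_mem_hamCompletions_pair hab hL⟩
  | k + 3, S, L, hS, hL => by
    obtain ⟨a, ha⟩ : S.Nonempty := Finset.card_pos.1 (by omega)
    set W := S \ insert a (L.map (partner · a)).toFinset
    have hW : k + 2 - L.length ≤ W.card := by
      have h₁ : S.card ≤ W.card + _ := Finset.card_le_card_sdiff_add_card
      have h₂ := Finset.card_insert_le a (L.map (partner · a)).toFinset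
      have h₃ := (L.map (partner · a)).toFinset_card_le
      rw [List.length_map] at h₃
      omega
    refine le_trans ?_ (mul_le_ncard_of_le_ncard_fiber (hamCompletions_finite S L) (partner · a) W
      (k := completionBound L.length (k + 1)) fun w hw => ?_)
    · rw [completionBound]
      exact Nat.mul_le_mul_right _ hW
    simp only [W, Finset.mem_sdiff, Finset.mem_insert, List.mem_toFinset, List.mem_map,
      not_or, not_exists, not_and] at hw
    obtain ⟨hwS, hwa, hwp⟩ := hw
    have hcard : (S \ {a, w}).card = k + 1 := by
      rw [Finset.card_sdiff_of_subset (Finset.insert_subset ha (Finset.singleton_subset_iff.2 hwS)),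
        Finset.card_pair (Ne.symm hwa), hS]
      rfl
    have hL' : ∀ A' ∈ L.map (contract · a w), IsPMOn (S \ {a, w}) A' := by
      simp only [List.mem_map]
      rintro _ ⟨A, hA, rfl⟩
      exact (hL A hA).contract ha hwS hwa fun h => hwp A hA h.symm
    have ih := completionBound_le_ncard_hamCompletions (k + 1) _ _ hcard hL'
    rw [List.length_map] at ih
    exact ih.trans (ncard_hamCompletions_contract_le hL ha hwS hwa fun A hA h => hwp A hA h.symm)

lemma completionBound_one_mul_two (m : ℕ) :
    completionBound 1 (2 * m + 2) * completionBound 2 (2 * m + 2) = (2 * m).factorial := by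
  induction m with
  | zero => rfl
  | succ m ih =>
    rw [show 2 * (m + 1) + 2 = 2 * m + 1 + 3 by ring, completionBound, completionBound,
      show 2 * m + 1 + 1 = 2 * m + 2 by ring, show 2 * (m + 1) = 2 * m + 1 + 1 by ring,
      Nat.factorial_succ, Nat.factorial_succ, ← ih]
    rw [show 2 * m + 1 + 2 - 1 = 2 * m + 1 + 1 by omega,
      show 2 * m + 1 + 2 - 2 = 2 * m + 1 by omega]
    ring

end Completions

section CompatiblePairs

variable {n : ℕ} {M₁ M₂ : Edges n}

lemma IsHam.card_eq {C : Edges n} (hC : IsHam C) : Multiset.card C = n := by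
  have := sum_edeg hC.1
  simp only [hC.2.1, Finset.sum_const, Finset.card_univ, Fintype.card_fin, smul_eq_mul] at this
  omega

lemma setOf_compatible_finite (G : Edges n) : {C : Edges n | Compatible G C}.Finite :=
  (finite_setOf_card_le n).subset fun _ hC => hC.1.card_eq.le

/-- Each pair gives the compatible cycle `N₁ + N₂` of `M₁ + M₂`, decomposed as
`(M₁ + N₁) + (M₂ + N₂)`. -/
def compatiblePairs (M₁ M₂ : Edges n) : Set (Edges n × Edges n) :=
  {p | p.1 ∈ hamCompletions Finset.univ [M₁] ∧ p.2 ∈ hamCompletions Finset.univ [p.1, M₂]}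

lemma compatiblePairs_finite (M₁ M₂ : Edges n) : (compatiblePairs M₁ M₂).Finite :=
  ((finite_setOf_card_le n).prod (finite_setOf_card_le n)).subset fun _ hp =>
    ⟨hp.1.1.card_le, hp.2.1.card_le⟩

lemma completionBound_mul_le_ncard_compatiblePairs (hM₁ : IsPM M₁) (hM₂ : IsPM M₂) :
    completionBound 1 n * completionBound 2 n ≤ (compatiblePairs M₁ M₂).ncard := by
  have hfin := hamCompletions_finite (Finset.univ : Finset (Fin n)) [M₁]
  have hcard : (Finset.univ : Finset (Fin n)).card = n := Finset.card_fin n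
  have h₁ := completionBound_le_ncard_hamCompletions n _ [M₁] hcard
    (by simpa [isPMOn_univ_iff] using hM₁)
  rw [Set.ncard_eq_toFinset_card _ hfin] at h₁
  refine (Nat.mul_le_mul_right _ h₁).trans (mul_le_ncard_of_le_ncard_fiber
    (compatiblePairs_finite M₁ M₂) Prod.fst _ fun N₁ hN₁ => ?_)
  rw [Set.Finite.mem_toFinset] at hN₁
  have h₂ := completionBound_le_ncard_hamCompletions n _ [N₁, M₂] hcard
    (by simpa [isPMOn_univ_iff] using ⟨isPMOn_univ_iff.1 hN₁.1, hM₂⟩)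
  rw [← Set.ncard_image_of_injective _ (Prod.mk_right_injective N₁)] at h₂
  refine h₂.trans (Set.ncard_le_ncard ?_ ((compatiblePairs_finite M₁ M₂).inter_of_left _))
  rintro _ ⟨N₂, hN₂, rfl⟩
  exact ⟨⟨hN₁, hN₂⟩, rfl⟩

lemma compatible_add_of_mem_compatiblePairs {p : Edges n × Edges n}
    (hp : p ∈ compatiblePairs M₁ M₂) : Compatible (M₁ + M₂) (p.1 + p.2) := by
  have hC₁ := hp.1.2 M₁ (List.mem_singleton_self _)
  have hC := hp.2.2 p.1 List.mem_cons_self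
  have hC₂ := hp.2.2 M₂ (by simp)
  rw [isHamOn_univ_iff] at hC₁ hC hC₂
  exact ⟨hC, _, _, hC₁, hC₂, by abel⟩

lemma ncard_compatiblePairs_fiber_le_two (hn : 3 ≤ n) (C : Edges n) :
    (compatiblePairs M₁ M₂ ∩ (fun p => p.1 + p.2) ⁻¹' {C}).ncard ≤ 2 := by
  rcases Set.eq_empty_or_nonempty (compatiblePairs M₁ M₂ ∩ (fun p => p.1 + p.2) ⁻¹' {C})
    with h | ⟨q, hq, rfl⟩
  · simp [h]
  have hPM {p : Edges n × Edges n} (hp : p ∈ compatiblePairs M₁ M₂) : IsPM p.1 ∧ IsPM p.2 :=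
    ⟨isPMOn_univ_iff.1 hp.1.1, isPMOn_univ_iff.1 hp.2.1⟩
  have hsub : compatiblePairs M₁ M₂ ∩ (fun p => p.1 + p.2) ⁻¹' {q.1 + q.2} ⊆ {q, q.swap} := by
    rintro p ⟨hp, hpq⟩
    rcases (compatible_add_of_mem_compatiblePairs hq).1.eq_or_eq_of_add_eq hn (hPM hq).1
      (hPM hq).2 (hPM hp).1 hpq with ⟨h₁, h₂⟩ | ⟨h₁, h₂⟩
    · exact .inl (Prod.ext h₁ h₂)
    · exact .inr (Prod.ext h₁ h₂)
  refine (Set.ncard_le_ncard hsub (Set.toFinite _)).trans ?_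
  exact (Set.ncard_insert_le _ _).trans (by rw [Set.ncard_singleton])

end CompatiblePairs

open Nat in
theorem compatible_cycles_even_case (n : ℕ) (hn : 4 ≤ n) (hne : Even n)
    (G : Edges n) (hG : TwoRegular G) (hEv : EvenCycles G) :
    (n - 2)! / 2 ≤ Set.ncard {C : Edges n | Compatible G C} := by
  obtain ⟨M₁, M₂, rfl, hM₁, hM₂⟩ := hG.exists_isPM_add hEv
  obtain ⟨m, rfl⟩ : ∃ m, n = 2 * m + 2 := ⟨n / 2 - 1, by rcases hne with ⟨k, rfl⟩; omega⟩
  have hlower := completionBound_mul_le_ncard_compatiblePairs hM₁ hM₂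
  rw [completionBound_one_mul_two] at hlower
  have hupper := ncard_le_mul_ncard_of_ncard_fiber_le (compatiblePairs_finite M₁ M₂)
    (setOf_compatible_finite _)
    (fun p hp => compatible_add_of_mem_compatiblePairs hp)
    fun C _ => ncard_compatiblePairs_fiber_le_two (by omega) C
  rw [Nat.add_sub_cancel]
  omega
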